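/- arXiv:1512.06812 — 2 statements merged into one kernel-verified Lean document; each statement's English description precedes it below -/
import Mathlib

section
/- Close–far symmetry: for k > 0 and y > 0, C_BS(k, 2k/y) = 1 - ∫₀^{C_BS(k,y)} (2k / Y_BS(k,u)²) du. -/
open MeasureTheory Real Filter Asymptotics Set

/-- Standard normal density. -/
noncomputable def phi (z : ℝ) : ℝ := (Real.sqrt (2 * Real.pi))⁻¹ * Real.exp (-z ^ 2 / 2)

/-- Standard normal CDF. -/
noncomputable def Phi (x : ℝ) : ℝ := ∫ z in Set.Iic x, phi z

/-- Black–Scholes normalized call price. -/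
noncomputable def CBS (k y : ℝ) : ℝ :=
  if 0 < y then Phi (-k / y + y / 2) - Real.exp k * Phi (-k / y - y / 2)
  else max (1 - Real.exp k) 0

/-- Implied total standard deviation: inverse of `CBS k` on `[0,∞)`. -/
noncomputable def YBS (k c : ℝ) : ℝ := sInf {y : ℝ | 0 ≤ y ∧ CBS k y = c}

/-- Inverse of the standard normal CDF on (0,1). -/
noncomputable def PhiInv (u : ℝ) : ℝ := sInf {x : ℝ | u ≤ Phi x}

/-- Extended-real quantile with the convention `Φ⁻¹(u) = +∞` for `u ≥ 1`, `-∞` for `u ≤ 0`. -/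
noncomputable def PhiInvE (u : ℝ) : EReal :=
  if 1 ≤ u then ⊤ else if u ≤ 0 then ⊥ else ((PhiInv u : ℝ) : EReal)

/-!
`C = CBS k` is a strictly increasing bijection from `(0, ∞)` onto `(0, 1)` with derivative
`C'(y) = φ(d₊(k, y))` (the two `d`-derivative terms cancel because `eᵏ φ(d₋) = φ(d₊)`).
Substituting `u = C(x)` turns the integral into `∫₀^y φ(d₊(k, x)) · 2k/x² dx`; the inversion
`x = 2k/t` maps `(2k/y, ∞)` onto `(0, y)` and satisfies `d₊(k, 2k/t) = -d₊(k, t)`, so by evenness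
of `φ` the integral becomes `∫_{2k/y}^∞ C'(t) dt = 1 - C(2k/y)`.
-/

open Topology

section Gaussian

lemma phi_pos (z : ℝ) : 0 < phi z := by
  unfold phi
  positivity

lemma continuous_phi : Continuous phi := by
  unfold phi
  fun_prop

lemma phi_neg (z : ℝ) : phi (-z) = phi z := by
  rw [phi, phi, neg_sq]

lemma integrable_phi : Integrable phi := by
  refine ((integrable_exp_neg_mul_sq (b := 1 / 2) (by norm_num)).const_mul
    (Real.sqrt (2 * π))⁻¹).congr (.of_eq ?_)
  ext z
  rw [phi]
  ring_nf

lemma integral_phi : ∫ z, phi z = 1 := by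
  have h : ∫ z : ℝ, Real.exp (-z ^ 2 / 2) = Real.sqrt (2 * π) := by
    rw [show 2 * π = π / (1 / 2) by ring, ← integral_gaussian]
    ring_nf
  simp only [phi]
  rw [integral_const_mul, h, inv_mul_cancel₀ (by positivity)]

lemma Phi_sub_Phi (a b : ℝ) : Phi b - Phi a = ∫ z in a..b, phi z :=
  intervalIntegral.integral_Iic_sub_Iic integrable_phi.integrableOn integrable_phi.integrableOn

lemma Phi_add_integral_Ioi (x : ℝ) : Phi x + ∫ z in Ioi x, phi z = 1 := by
  rw [Phi, ← compl_Iic, integral_add_compl measurableSet_Iic integrable_phi, integral_phi]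

lemma hasDerivAt_Phi (x : ℝ) : HasDerivAt Phi (phi x) x := by
  have h : HasDerivAt (fun u => Phi 0 + ∫ z in (0 : ℝ)..u, phi z) (phi x) x :=
    (intervalIntegral.integral_hasDerivAt_right (continuous_phi.intervalIntegrable _ _)
      (continuous_phi.stronglyMeasurableAtFilter _ _) continuous_phi.continuousAt).const_add _
  refine h.congr_of_eventuallyEq (.of_eq ?_)
  ext u
  rw [← Phi_sub_Phi, add_sub_cancel]

lemma tendsto_Phi_atTop : Tendsto Phi atTop (𝓝 1) := by
  have h := (aecover_Iic tendsto_id).integral_tendsto_of_countably_generated integrable_phi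
  rw [integral_phi] at h
  exact h

lemma tendsto_Phi_atBot : Tendsto Phi atBot (𝓝 0) := by
  have h := ((aecover_Ioi tendsto_id).integral_tendsto_of_countably_generated
    integrable_phi).const_sub 1
  rw [integral_phi, sub_self] at h
  exact h.congr fun x => (eq_sub_of_add_eq (Phi_add_integral_Ioi x)).symm

end Gaussian

lemma hasDerivAt_const_div (a : ℝ) {x : ℝ} (hx : x ≠ 0) :
    HasDerivAt (fun x => a / x) (-a / x ^ 2) x := by
  simpa only [div_eq_mul_inv, neg_mul, mul_neg] using (hasDerivAt_inv hx).const_mul a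

lemma setIntegral_Ioo_zero_eq_setIntegral_Ioi_comp_div {E : Type*} [NormedAddCommGroup E]
    [NormedSpace ℝ E] (f : ℝ → E) {a y : ℝ} (ha : 0 < a) (hy : 0 < y) :
    ∫ x in Ioo 0 y, f x = ∫ t in Ioi (a / y), (a / t ^ 2) • f (a / t) := by
  have hpos : ∀ t ∈ Ioi (a / y), 0 < t := fun t ht => (div_pos ha hy).trans ht
  have himage : (fun t => a / t) '' Ioi (a / y) = Ioo 0 y := by
    ext x
    refine ⟨?_, fun ⟨hx, hxy⟩ =>
      ⟨a / x, div_lt_div_of_pos_left ha hx hxy, div_div_cancel₀ ha.ne'⟩⟩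
    rintro ⟨t, ht, rfl⟩
    exact ⟨div_pos ha (hpos t ht), (div_lt_comm₀ hy (hpos t ht)).mp ht⟩
  have hderiv : ∀ t ∈ Ioi (a / y),
      HasDerivWithinAt (fun t => a / t) (-a / t ^ 2) (Ioi (a / y)) t := fun t ht =>
    (hasDerivAt_const_div a (hpos t ht).ne').hasDerivWithinAt
  have hinj : InjOn (fun t => a / t) (Ioi (a / y)) := fun _ _ _ _ h =>
    inv_injective (mul_left_cancel₀ ha.ne' h)
  rw [← himage, integral_image_eq_integral_abs_deriv_smul measurableSet_Ioi hderiv hinj]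
  refine setIntegral_congr_fun measurableSet_Ioi fun t ht => ?_
  rw [neg_div, abs_neg, abs_of_pos (div_pos ha (pow_pos (hpos t ht) 2))]

noncomputable def dPlus (k y : ℝ) : ℝ := -k / y + y / 2

noncomputable def dMinus (k y : ℝ) : ℝ := -k / y - y / 2

section BlackScholes

variable {k y : ℝ}

lemma CBS_of_pos (hy : 0 < y) : CBS k y = Phi (dPlus k y) - Real.exp k * Phi (dMinus k y) :=
  if_pos hy

lemma CBS_zero (hk : 0 ≤ k) : CBS k 0 = 0 := by
  rw [CBS, if_neg (lt_irrefl 0), max_eq_right (by linarith [Real.one_le_exp hk])]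

lemma exp_mul_phi_dMinus (hy : y ≠ 0) : Real.exp k * phi (dMinus k y) = phi (dPlus k y) := by
  rw [phi, phi, mul_left_comm, ← Real.exp_add, dPlus, dMinus]
  congr 2
  field_simp
  ring

lemma dPlus_two_mul_div (hk : k ≠ 0) {t : ℝ} (ht : t ≠ 0) :
    dPlus k (2 * k / t) = -dPlus k t := by
  rw [dPlus, dPlus]
  field_simp
  ring

lemma hasDerivAt_dPlus (hy : y ≠ 0) : HasDerivAt (dPlus k) (k / y ^ 2 + 1 / 2) y := by
  have h := (hasDerivAt_const_div (-k) hy).add ((hasDerivAt_id y).div_const 2)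
  rw [neg_neg] at h
  exact h

lemma hasDerivAt_dMinus (hy : y ≠ 0) : HasDerivAt (dMinus k) (k / y ^ 2 - 1 / 2) y := by
  have h := (hasDerivAt_const_div (-k) hy).sub ((hasDerivAt_id y).div_const 2)
  rw [neg_neg] at h
  exact h

lemma hasDerivAt_CBS (hy : 0 < y) : HasDerivAt (CBS k) (phi (dPlus k y)) y := by
  have h := ((hasDerivAt_Phi _).comp y (hasDerivAt_dPlus (k := k) hy.ne')).sub
    (((hasDerivAt_Phi _).comp y (hasDerivAt_dMinus (k := k) hy.ne')).const_mul (Real.exp k))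
  rw [← mul_assoc, exp_mul_phi_dMinus hy.ne', ← mul_sub, add_sub_sub_cancel, add_halves,
    mul_one] at h
  exact h.congr_of_eventuallyEq (eventually_gt_nhds hy |>.mono fun x hx => CBS_of_pos hx)

lemma strictMonoOn_CBS : StrictMonoOn (CBS k) (Ioi 0) := by
  refine strictMonoOn_of_deriv_pos (convex_Ioi 0)
    (fun x hx => (hasDerivAt_CBS hx).continuousAt.continuousWithinAt) fun x hx => ?_
  rw [interior_Ioi] at hx
  rw [(hasDerivAt_CBS hx).deriv]
  exact phi_pos _

lemma tendsto_CBS_atTop : Tendsto (CBS k) atTop (𝓝 1) := by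
  have hd : Tendsto (fun y : ℝ => -k / y) atTop (𝓝 0) :=
    tendsto_const_nhds.div_atTop tendsto_id
  have hdPlus : Tendsto (dPlus k) atTop atTop :=
    hd.add_atTop (tendsto_id.atTop_div_const two_pos)
  have hdMinus : Tendsto (dMinus k) atTop atBot :=
    (hd.add_atBot (tendsto_neg_atTop_atBot.comp (tendsto_id.atTop_div_const two_pos))).congr
      fun y => (sub_eq_add_neg _ _).symm
  have h := (tendsto_Phi_atTop.comp hdPlus).sub ((tendsto_Phi_atBot.comp hdMinus).const_mul
    (Real.exp k))
  rw [mul_zero, sub_zero] at h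
  exact h.congr' (eventually_gt_atTop 0 |>.mono fun y hy => (CBS_of_pos hy).symm)

lemma tendsto_CBS_nhdsGT_zero (hk : 0 < k) : Tendsto (CBS k) (𝓝[>] 0) (𝓝 0) := by
  have hd : Tendsto (fun y : ℝ => -k / y) (𝓝[>] 0) atBot :=
    (tendsto_inv_nhdsGT_zero.const_mul_atTop_of_neg (neg_neg_of_pos hk)).congr
      fun y => (div_eq_mul_inv _ _).symm
  have hhalf : Tendsto (fun y : ℝ => y / 2) (𝓝[>] 0) (𝓝 0) :=
    ((continuous_id.div_const 2).tendsto' 0 0 (zero_div 2)).mono_left nhdsWithin_le_nhds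
  have hdPlus : Tendsto (dPlus k) (𝓝[>] 0) atBot := hd.atBot_add hhalf
  have hdMinus : Tendsto (dMinus k) (𝓝[>] 0) atBot :=
    (hd.atBot_add (neg_zero (G := ℝ) ▸ hhalf.neg)).congr fun y => (sub_eq_add_neg _ _).symm
  have h := (tendsto_Phi_atBot.comp hdPlus).sub ((tendsto_Phi_atBot.comp hdMinus).const_mul
    (Real.exp k))
  rw [mul_zero, sub_zero] at h
  exact h.congr' (eventually_mem_nhdsWithin.mono fun y hy => (CBS_of_pos hy).symm)

lemma CBS_pos (hk : 0 < k) (hy : 0 < y) : 0 < CBS k y := by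
  have hy2 : 0 < y / 2 := half_pos hy
  have hnonneg : 0 ≤ CBS k (y / 2) := by
    refine le_of_tendsto (tendsto_CBS_nhdsGT_zero hk) ?_
    filter_upwards [Ioo_mem_nhdsGT hy2] with t ht
    exact (strictMonoOn_CBS ht.1 hy2 ht.2).le
  exact hnonneg.trans_lt (strictMonoOn_CBS hy2 hy (half_lt_self hy))

lemma YBS_CBS (hk : 0 < k) (hy : 0 < y) : YBS k (CBS k y) = y := by
  have hset : {x : ℝ | 0 ≤ x ∧ CBS k x = CBS k y} = {y} := by
    ext x
    refine ⟨fun ⟨hx, hxy⟩ => ?_, fun hx => ⟨hx ▸ hy.le, hx ▸ rfl⟩⟩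
    rcases hx.eq_or_lt with rfl | hx
    · exact absurd (CBS_zero hk.le ▸ hxy) (CBS_pos hk hy).ne
    · exact strictMonoOn_CBS.injOn hx hy hxy
  rw [YBS, hset, csInf_singleton]

lemma image_CBS_Ioc (hk : 0 < k) (hy : 0 < y) : CBS k '' Ioc 0 y = Ioc 0 (CBS k y) := by
  refine Subset.antisymm ?_ fun u ⟨hu, huy⟩ => ?_
  · rintro _ ⟨x, hx, rfl⟩
    exact ⟨CBS_pos hk hx.1, strictMonoOn_CBS.monotoneOn hx.1 hy hx.2⟩
  · obtain ⟨t, htu, ht⟩ := ((tendsto_CBS_nhdsGT_zero hk).eventually_lt_const hu).and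
      (Ioo_mem_nhdsGT hy) |>.exists
    have hcont : ContinuousOn (CBS k) (Icc t y) := fun x hx =>
      (hasDerivAt_CBS (ht.1.trans_le hx.1)).continuousAt.continuousWithinAt
    obtain ⟨x, hx, rfl⟩ := intermediate_value_Icc ht.2.le hcont ⟨htu.le, huy⟩
    exact ⟨x, ⟨ht.1.trans_le hx.1, hx.2⟩, rfl⟩

lemma intervalIntegral_two_mul_div_YBS_sq (hk : 0 < k) (hy : 0 < y) :
    ∫ u in (0 : ℝ)..CBS k y, 2 * k / YBS k u ^ 2 =
      ∫ x in Ioo 0 y, phi (dPlus k x) * (2 * k / x ^ 2) := by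
  rw [intervalIntegral.integral_of_le (CBS_pos hk hy).le, ← image_CBS_Ioc hk hy,
    integral_image_eq_integral_abs_deriv_smul measurableSet_Ioc
      (fun x hx => (hasDerivAt_CBS hx.1).hasDerivWithinAt)
      (strictMonoOn_CBS.injOn.mono Ioc_subset_Ioi_self), ← integral_Ioc_eq_integral_Ioo]
  refine setIntegral_congr_fun measurableSet_Ioc fun x hx => ?_
  rw [smul_eq_mul, abs_of_pos (phi_pos _), YBS_CBS hk hx.1]

lemma setIntegral_Ioi_phi_dPlus {c : ℝ} (hc : 0 < c) :
    ∫ x in Ioi c, phi (dPlus k x) = 1 - CBS k c :=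
  integral_Ioi_of_hasDerivAt_of_nonneg' (fun _ hx => hasDerivAt_CBS (hc.trans_le hx))
    (fun _ _ => (phi_pos _).le) tendsto_CBS_atTop

end BlackScholes

theorem stmt_4 (k y : ℝ) (hk : 0 < k) (hy : 0 < y) :
    CBS k (2 * k / y) = 1 - ∫ u in (0:ℝ)..(CBS k y), 2 * k / (YBS k u) ^ 2 := by
  have hc : 0 < 2 * k / y := by positivity
  have hinversion : ∀ t ∈ Ioi (2 * k / y), (2 * k / t ^ 2) •
      (phi (dPlus k (2 * k / t)) * (2 * k / (2 * k / t) ^ 2)) = phi (dPlus k t) := by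
    intro t ht
    have ht0 : t ≠ 0 := (hc.trans ht).ne'
    rw [dPlus_two_mul_div hk.ne' ht0, phi_neg, smul_eq_mul]
    field_simp
  rw [intervalIntegral_two_mul_div_YBS_sq hk hy,
    setIntegral_Ioo_zero_eq_setIntegral_Ioi_comp_div _ (by positivity : 0 < 2 * k) hy,
    setIntegral_congr_fun measurableSet_Ioi hinversion, setIntegral_Ioi_phi_dPlus hc,
    sub_sub_cancel]
end

section
/- For k > 0, ∫₀^∞ φ(-k/y + y/2)/y dy = ∫_{-∞}^∞ φ(x)/√(x² + 2k) dx, where φ is the standard normal density. -/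
/-!
The substitution `x = -k / y + y / 2` maps `(0, ∞)` increasingly onto `ℝ`; its inverse is
`y = x + √(x² + 2k)`, and `dx = (k / y + y / 2) dy / y` with `k / y + y / 2 = √(x² + 2k)`.
-/

open MeasureTheory Real Filter Asymptotics Set

section Substitution

variable {k : ℝ}

lemma sqrt_sq_neg_div_add_half_add (hk : 0 ≤ k) {y : ℝ} (hy : 0 < y) :
    √((-k / y + y / 2) ^ 2 + 2 * k) = k / y + y / 2 := by
  have hsq : (-k / y + y / 2) ^ 2 + 2 * k = (k / y + y / 2) ^ 2 := by
    field_simp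
    ring
  rw [hsq, sqrt_sq (by positivity)]

lemma neg_div_add_half_add_sqrt (hk : 0 ≤ k) {y : ℝ} (hy : 0 < y) :
    (-k / y + y / 2) + √((-k / y + y / 2) ^ 2 + 2 * k) = y := by
  rw [sqrt_sq_neg_div_add_half_add hk hy]
  ring

lemma add_sqrt_sq_add_pos (hk : 0 < k) (x : ℝ) : 0 < x + √(x ^ 2 + 2 * k) := by
  have habs : |x| < √(x ^ 2 + 2 * k) := by
    rw [← sqrt_sq_eq_abs]
    exact sqrt_lt_sqrt (sq_nonneg x) (by linarith)
  linarith [neg_abs_le x]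

lemma neg_div_add_half_of_add_sqrt (hk : 0 < k) (x : ℝ) :
    -k / (x + √(x ^ 2 + 2 * k)) + (x + √(x ^ 2 + 2 * k)) / 2 = x := by
  have hy := (add_sqrt_sq_add_pos hk x).ne'
  have hs : √(x ^ 2 + 2 * k) ^ 2 = x ^ 2 + 2 * k := sq_sqrt (by positivity)
  rw [div_add_div _ _ hy two_ne_zero, div_eq_iff (mul_ne_zero hy two_ne_zero)]
  linear_combination hs

lemma image_neg_div_add_half_Ioi (hk : 0 < k) :
    (fun y => -k / y + y / 2) '' Ioi 0 = univ :=
  eq_univ_of_forall fun x =>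
    ⟨x + √(x ^ 2 + 2 * k), add_sqrt_sq_add_pos hk x, neg_div_add_half_of_add_sqrt hk x⟩

lemma injOn_neg_div_add_half_Ioi (hk : 0 ≤ k) : InjOn (fun y => -k / y + y / 2) (Ioi 0) :=
  LeftInvOn.injOn (f₁' := fun x => x + √(x ^ 2 + 2 * k))
    fun _ hy => neg_div_add_half_add_sqrt hk hy

lemma hasDerivAt_neg_div_add_half {y : ℝ} (hy : y ≠ 0) :
    HasDerivAt (fun y => -k / y + y / 2) (k / y ^ 2 + 1 / 2) y :=
  (((hasDerivAt_const y (-k)).div (hasDerivAt_id' y) hy).add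
    ((hasDerivAt_id' y).div_const 2)).congr_deriv (by ring)

theorem integral_comp_neg_div_add_half {E : Type*} [NormedAddCommGroup E] [NormedSpace ℝ E]
    (hk : 0 < k) (f : ℝ → E) :
    ∫ y in Ioi 0, (k / y ^ 2 + 1 / 2) • f (-k / y + y / 2) = ∫ x, f x := by
  conv_rhs => rw [← setIntegral_univ, ← image_neg_div_add_half_Ioi hk,
    integral_image_eq_integral_abs_deriv_smul measurableSet_Ioi
      (fun y hy => (hasDerivAt_neg_div_add_half (ne_of_gt hy)).hasDerivWithinAt)
      (injOn_neg_div_add_half_Ioi hk.le)]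
  exact setIntegral_congr_fun measurableSet_Ioi fun y (hy : 0 < y) => by
    rw [abs_of_pos (by positivity)]

end Substitution

theorem stmt_8 (k : ℝ) (hk : 0 < k) :
    ∫ y in Set.Ioi (0:ℝ), phi (-k / y + y / 2) / y =
      ∫ x : ℝ, phi x / Real.sqrt (x ^ 2 + 2 * k) := by
  rw [← integral_comp_neg_div_add_half hk]
  refine setIntegral_congr_fun measurableSet_Ioi fun y (hy : 0 < y) => ?_
  rw [sqrt_sq_neg_div_add_half_add hk.le hy, smul_eq_mul]
  field_simp
end
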